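/- If an ordered graph G without isolated vertices admits an ordered homomorphism to some ordered matching, then G admits an ordered retraction to an ordered matching that is an ordered subgraph of G. -/

import Mathlib

/-- An ordered matching: every vertex is incident to exactly one edge. -/
def IsOrderedMatching {V : Type*} (G : SimpleGraph V) : Prop :=
  ∀ v : V, ∃! w : V, G.Adj v w

/-!
Orient each edge `{a, a'}` of the matching `M` from its smaller end to its larger one. For every
edge hit by `f`, pick a vertex `v` over the smaller end and a neighbour of `v` (which lies over
the larger end); the resulting section `s` of `f` over its image sends `M`-edges to `G`-edges.
Then `r = s ∘ f` retracts `G` onto the subgraph induced on its image, which is a matching because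
`M` is one, and `r` is monotone because `f ∘ r = f` and `f` is monotone.
-/

namespace IsOrderedMatching

variable {W : Type*} {M : SimpleGraph W} (hM : IsOrderedMatching M)

noncomputable def partner (a : W) : W := (hM a).choose

theorem adj_partner (a : W) : M.Adj a (hM.partner a) := (hM a).choose_spec.1

theorem eq_partner_of_adj {a b : W} (h : M.Adj a b) : b = hM.partner a :=
  (hM a).choose_spec.2 b h

theorem partner_partner (a : W) : hM.partner (hM.partner a) = a :=
  (hM.eq_partner_of_adj (hM.adj_partner a).symm).symm

end IsOrderedMatching

theorem Monotone.section_comp {V W : Type*} [LinearOrder V] [PartialOrder W] {f : V → W}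
    (hf : Monotone f) {s : W → V} (hs : ∀ v, f (s (f v)) = f v) : Monotone (s ∘ f) := by
  intro u v huv
  by_contra h
  have hlt : s (f v) < s (f u) := not_le.mp h
  have hfeq : f u = f v := le_antisymm (hf huv) (by simpa only [hs] using hf hlt.le)
  exact h (le_of_eq (congrArg s hfeq))

section

variable {V W : Type*} {G : SimpleGraph V} {M : SimpleGraph W} {f : V → W}

theorem exists_section_adj_of_isOrderedMatching [LinearOrder W] [Nonempty V]
    (hM : IsOrderedMatching M) (hhom : ∀ u v, G.Adj u v → M.Adj (f u) (f v))
    (hiso : ∀ x, ∃ y, G.Adj x y) :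
    ∃ s : W → V, (∀ v, f (s (f v)) = f v) ∧ ∀ u v, G.Adj u v → G.Adj (s (f u)) (s (f v)) := by
  classical
  choose nbr hnbr using hiso
  have hf_nbr : ∀ v, f (nbr v) = hM.partner (f v) := fun v =>
    hM.eq_partner_of_adj (hhom _ _ (hnbr v))
  let s : W → V := fun a =>
    if a ≤ hM.partner a then Function.invFun f a
    else nbr (Function.invFun f (hM.partner a))
  refine ⟨s, fun v => ?_, fun u v huv => ?_⟩
  · by_cases h : f v ≤ hM.partner (f v)
    · simpa only [s, if_pos h] using Function.invFun_eq ⟨v, rfl⟩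
    · simp only [s, if_neg h, hf_nbr, Function.invFun_eq ⟨nbr v, hf_nbr v⟩, hM.partner_partner]
  · rw [hM.eq_partner_of_adj (hhom _ _ huv)]
    rcases lt_or_gt_of_ne (hM.adj_partner (f u)).ne with h | h
    · simpa only [s, if_pos h.le, if_neg h.not_ge, hM.partner_partner] using hnbr _
    · simpa only [s, if_neg h.not_ge, if_pos h.le, hM.partner_partner] using (hnbr _).symm

theorem existsUnique_adj_induce_range_section_comp (hM : IsOrderedMatching M)
    (hhom : ∀ u v, G.Adj u v → M.Adj (f u) (f v)) (hiso : ∀ x, ∃ y, G.Adj x y)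
    {s : W → V} (hfs : ∀ v, f (s (f v)) = f v)
    (hs_adj : ∀ u v, G.Adj u v → G.Adj (s (f u)) (s (f v))) :
    ∀ x ∈ Set.range (s ∘ f), ∃! y, ((⊤ : G.Subgraph).induce (Set.range (s ∘ f))).Adj x y := by
  rintro _ ⟨v, rfl⟩
  obtain ⟨w, hvw⟩ := hiso v
  refine ⟨s (f w), ⟨Set.mem_range_self v, Set.mem_range_self w, hs_adj v w hvw⟩, ?_⟩
  rintro _ ⟨-, ⟨w', rfl⟩, hvw'⟩
  have hM_adj : M.Adj (f v) (f w') := by simpa only [Function.comp, hfs] using hhom _ _ hvw'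
  exact congrArg s ((hM (f v)).unique hM_adj (hhom _ _ hvw))

end

theorem stmt16_general {V W : Type*} [LinearOrder V] [LinearOrder W]
    (G : SimpleGraph V) (hiso : ∀ x : V, ∃ y : V, G.Adj x y)
    (M : SimpleGraph W) (hM : IsOrderedMatching M)
    (f : V → W) (hmono : Monotone f)
    (hhom : ∀ u v : V, G.Adj u v → M.Adj (f u) (f v)) :
    ∃ H : G.Subgraph, (∀ x ∈ H.verts, ∃! y : V, H.Adj x y) ∧
      ∃ r : V → V, Monotone r ∧ (∀ x : V, r x ∈ H.verts) ∧
        (∀ u v : V, G.Adj u v → H.Adj (r u) (r v)) ∧ (∀ x ∈ H.verts, r x = x) := by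
  rcases isEmpty_or_nonempty V with _ | _
  · exact ⟨⊥, fun x => isEmptyElim x, id, monotone_id, isEmptyElim, fun u => isEmptyElim u,
      fun x => isEmptyElim x⟩
  obtain ⟨s, hfs, hs_adj⟩ := exists_section_adj_of_isOrderedMatching hM hhom hiso
  refine ⟨(⊤ : G.Subgraph).induce (Set.range (s ∘ f)),
    existsUnique_adj_induce_range_section_comp hM hhom hiso hfs hs_adj,
    s ∘ f, hmono.section_comp hfs, Set.mem_range_self, fun u v huv => ?_, ?_⟩
  · exact ⟨Set.mem_range_self u, Set.mem_range_self v, hs_adj u v huv⟩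
  · rintro _ ⟨v, rfl⟩
    simp only [Function.comp, hfs]

/-- If an ordered graph `G` without isolated vertices admits an ordered
homomorphism to some ordered matching `M`, then `G` admits an ordered
retraction to an ordered subgraph of `G` which is an ordered matching. -/
theorem stmt16 {V W : Type*} [LinearOrder V] [Fintype V] [LinearOrder W]
    (G : SimpleGraph V) (hiso : ∀ x : V, ∃ y : V, G.Adj x y)
    (M : SimpleGraph W) (hM : IsOrderedMatching M)
    (f : V → W) (hmono : Monotone f)
    (hhom : ∀ u v : V, G.Adj u v → M.Adj (f u) (f v)) :
    ∃ H : G.Subgraph, (∀ x ∈ H.verts, ∃! y : V, H.Adj x y) ∧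
      ∃ r : V → V, Monotone r ∧ (∀ x : V, r x ∈ H.verts) ∧
        (∀ u v : V, G.Adj u v → H.Adj (r u) (r v)) ∧ (∀ x ∈ H.verts, r x = x) :=
  stmt16_general G hiso M hM f hmono hhom
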